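/- Let n ≥ 1, δ ∈ (0,1), and suppose a population of paired binary values (f(x), c(x)) has joint probabilities W_{ij}. Conditionally on the event counts, among samples satisfying c(x)=1 the indicator 1(f(x)=1) is i.i.d. Bernoulli with mean recall. Hence, if m denotes the number of probing samples with c(x)=1, then conditional on m ≥ 1, with probability at least 1 − δ the empirical recall F_{11}/(F_{11}+F_{01}) (computed from these m samples) differs from the true recall by at most √(log(2/δ)/(2m)). -/

import Mathlib

open MeasureTheory ProbabilityTheory
open scoped ENNReal

lemma bern_mgf_le (p : ℝ) (hp0 : 0 ≤ p) (hp1 : p ≤ 1) (t : ℝ) :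
    (1 - p) + p * Real.exp t ≤ Real.exp (t * p + t ^ 2 / 8) := by
  have hD : ∀ s : ℝ, 0 < 1 - p + p * Real.exp s := by
    intro s
    rcases eq_or_lt_of_le hp0 with h | h
    · simp [← h]
    · have := Real.exp_pos s
      nlinarith
  set g' : ℝ → ℝ := fun s => p * Real.exp s / (1 - p + p * Real.exp s) - p with hg'def
  have hDd : ∀ s : ℝ, HasDerivAt (fun s => 1 - p + p * Real.exp s) (p * Real.exp s) s := by
    intro s
    exact ((Real.hasDerivAt_exp s).const_mul p).const_add (1 - p)
  have hg : ∀ s : ℝ, HasDerivAt (fun s => Real.log (1 - p + p * Real.exp s) - s * p) (g' s) s := by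
    intro s
    exact ((hDd s).log (hD s).ne').sub ((hasDerivAt_id s).mul_const p |>.congr_deriv (one_mul p))
  have hg' : ∀ s : ℝ, HasDerivAt g'
      (p * Real.exp s * (1 - p) / (1 - p + p * Real.exp s) ^ 2) s := by
    intro s
    have h1 : HasDerivAt (fun s => p * Real.exp s / (1 - p + p * Real.exp s))
        ((p * Real.exp s * (1 - p + p * Real.exp s) - p * Real.exp s * (p * Real.exp s)) /
          (1 - p + p * Real.exp s) ^ 2) s :=
      ((Real.hasDerivAt_exp s).const_mul p).div (hDd s) (hD s).ne'
    have := h1.sub_const p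
    refine this.congr_deriv ?_
    have := (hD s).ne'
    rw [div_left_inj' (pow_ne_zero 2 this)]
    ring
  have hg''le : ∀ s : ℝ, p * Real.exp s * (1 - p) / (1 - p + p * Real.exp s) ^ 2 ≤ 1 / 4 := by
    intro s
    rw [div_le_iff₀ (pow_pos (hD s) 2)]
    nlinarith [sq_nonneg (p * Real.exp s - (1 - p)), Real.exp_pos s]
  -- h' s = s/4 - g' s is monotone
  have hh' : ∀ s : ℝ, HasDerivAt (fun s => s / 4 - g' s)
      (1 / 4 - p * Real.exp s * (1 - p) / (1 - p + p * Real.exp s) ^ 2) s := by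
    intro s
    exact ((hasDerivAt_id s).div_const 4).sub (hg' s)
  have hmono : Monotone (fun s => s / 4 - g' s) := by
    apply monotone_of_deriv_nonneg
    · exact fun s => (hh' s).differentiableAt
    · intro s
      rw [(hh' s).deriv]
      linarith [hg''le s]
  have hg'0 : g' 0 = 0 := by
    simp [hg'def]
  have hsign : ∀ s : ℝ, 0 ≤ s → 0 ≤ s / 4 - g' s := by
    intro s hs
    have := hmono hs
    simpa [hg'0] using this
  have hsign' : ∀ s : ℝ, s ≤ 0 → s / 4 - g' s ≤ 0 := by
    intro s hs
    have := hmono hs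
    simpa [hg'0] using this
  -- h s = s^2/8 - g s has h 0 = 0 and deriv h s = h' s
  set h : ℝ → ℝ := fun s => s ^ 2 / 8 - (Real.log (1 - p + p * Real.exp s) - s * p) with hhdef
  have hh : ∀ s : ℝ, HasDerivAt h (s / 4 - g' s) s := by
    intro s
    have h2 : HasDerivAt (fun s : ℝ => s ^ 2 / 8) (s / 4) s := by
      have := (hasDerivAt_pow 2 s).div_const 8
      refine this.congr_deriv ?_
      norm_num
      ring
    exact h2.sub (hg s)
  have hh0 : h 0 = 0 := by simp [hhdef]
  have key : ∀ s : ℝ, 0 ≤ h s := by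
    intro s
    rcases le_total 0 s with hs | hs
    · have : MonotoneOn h (Set.Ici 0) := by
        apply monotoneOn_of_deriv_nonneg (convex_Ici 0)
        · exact Continuous.continuousOn
            (Differentiable.continuous (fun x => (hh x).differentiableAt))
        · intro x hx
          exact (hh x).differentiableAt.differentiableWithinAt
        · intro x hx
          rw [(hh x).deriv]
          exact hsign x (le_of_lt (by simpa using hx))
      have := this (Set.self_mem_Ici) (Set.mem_Ici.mpr hs) hs
      rwa [hh0] at this
    · have : AntitoneOn h (Set.Iic 0) := by
        apply antitoneOn_of_deriv_nonpos (convex_Iic 0)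
        · exact Continuous.continuousOn
            (Differentiable.continuous (fun x => (hh x).differentiableAt))
        · intro x hx
          exact (hh x).differentiableAt.differentiableWithinAt
        · intro x hx
          rw [(hh x).deriv]
          exact hsign' x (le_of_lt (by simpa using hx))
      have := this (Set.mem_Iic.mpr hs) (Set.self_mem_Iic) hs
      rwa [hh0] at this
  have hgle : Real.log (1 - p + p * Real.exp t) - t * p ≤ t ^ 2 / 8 := by
    have := key t
    simp only [hhdef] at this
    linarith
  have : Real.log (1 - p + p * Real.exp t) ≤ t * p + t ^ 2 / 8 := by linarith
  calc (1 - p) + p * Real.exp t = Real.exp (Real.log (1 - p + p * Real.exp t)) := by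
        rw [Real.exp_log (hD t)]
    _ ≤ Real.exp (t * p + t ^ 2 / 8) := Real.exp_le_exp.mpr this

lemma bernoulli_mgf {Ω : Type*} [MeasurableSpace Ω] (μ : Measure Ω) [IsProbabilityMeasure μ]
    (X : Ω → ℝ) (hX : Measurable X) (hval : ∀ ω, X ω = 0 ∨ X ω = 1)
    (p : ℝ) (hp0 : 0 ≤ p) (hmean : μ {ω | X ω = 1} = ENNReal.ofReal p) (t : ℝ) :
    mgf X μ t = (1 - p) + p * Real.exp t := by
  have hA : MeasurableSet {ω | X ω = 1} := hX (measurableSet_singleton 1)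
  have hXind : X = Set.indicator {ω | X ω = 1} (fun _ => (1 : ℝ)) := by
    funext ω
    rcases hval ω with h | h
    · rw [h, Set.indicator_of_notMem]
      simp [Set.mem_setOf_eq, h]
    · rw [h, Set.indicator_of_mem]
      exact h
  have hXint : Integrable X μ := by
    rw [hXind]
    exact (integrable_const (1 : ℝ)).indicator hA
  have hXavg : ∫ ω, X ω ∂μ = p := by
    rw [show (fun ω => X ω) = X from rfl, hXind, integral_indicator_const (1 : ℝ) hA, measureReal_def, hmean,
      smul_eq_mul, mul_one, ENNReal.toReal_ofReal hp0]
  have hpt : ∀ ω, Real.exp (t * X ω) = 1 + (Real.exp t - 1) * X ω := by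
    intro ω
    rcases hval ω with h | h <;> simp [h]
  unfold mgf
  calc ∫ ω, Real.exp (t * X ω) ∂μ = ∫ ω, (1 + (Real.exp t - 1) * X ω) ∂μ := by
        exact integral_congr_ae (Filter.Eventually.of_forall hpt)
    _ = 1 + (Real.exp t - 1) * p := by
        rw [integral_add (integrable_const 1) (hXint.const_mul _), integral_const,
          integral_const_mul, hXavg]
        simp
    _ = (1 - p) + p * Real.exp t := by ring



/-- Convergence rate of empirical recall: conditionally on the `m ≥ 1` probing samples
with `c(x) = 1`, the success indicators are i.i.d. Bernoulli with mean equal to the true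
recall `W₁₁/(W₁₁+W₀₁)`, so with probability at least `1 - δ` the empirical recall is
within `√(log(2/δ)/(2m))` of the true recall. -/
theorem recall_convergence_rate
    {Ω : Type*} [MeasurableSpace Ω] (μ : Measure Ω) [IsProbabilityMeasure μ]
    (W11 W01 : ℝ) (hW11 : 0 ≤ W11) (hW01 : 0 ≤ W01) (hWpos : 0 < W11 + W01)
    (m : ℕ) (hm : 1 ≤ m)
    (X : Fin m → Ω → ℝ)
    (hmeas : ∀ i, Measurable (X i))
    (hindep : iIndepFun X μ)
    (hval : ∀ i, ∀ ω, X i ω = 0 ∨ X i ω = 1)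
    (hmean : ∀ i, μ {ω | X i ω = 1} = ENNReal.ofReal (W11 / (W11 + W01)))
    (δ : ℝ) (hδ : δ ∈ Set.Ioo (0 : ℝ) 1) :
    1 - ENNReal.ofReal δ ≤
      μ {ω | |(∑ i, X i ω) / m - W11 / (W11 + W01)| ≤
        Real.sqrt (Real.log (2 / δ) / (2 * m))} := by

  obtain ⟨hδ0, hδ1⟩ := hδ
  set p : ℝ := W11 / (W11 + W01) with hpdef
  have hp0 : 0 ≤ p := div_nonneg hW11 hWpos.le
  have hp1 : p ≤ 1 := (div_le_one hWpos).mpr (by linarith)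
  have hm0 : (0 : ℝ) < (m : ℝ) := by exact_mod_cast hm
  set ε : ℝ := Real.sqrt (Real.log (2 / δ) / (2 * m)) with hεdef
  have hlogpos : 0 < Real.log (2 / δ) := by
    apply Real.log_pos
    rw [lt_div_iff₀ hδ0]
    linarith
  have hε0 : 0 < ε := Real.sqrt_pos.mpr (by positivity)
  have hε2 : ε ^ 2 = Real.log (2 / δ) / (2 * m) := Real.sq_sqrt (by positivity)
  -- mgf bound for the sum
  have hS : Measurable (∑ i, X i) := by
    have hfe : (∑ i : Fin m, X i) = fun ω => ∑ i, X i ω := by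
      funext ω; simp
    rw [hfe]
    exact Finset.measurable_sum _ (fun i _ => hmeas i)
  have hint : ∀ t : ℝ, Integrable (fun ω => Real.exp (t * (∑ i, X i) ω)) μ := by
    intro t
    apply Integrable.mono' (integrable_const (Real.exp (|t| * m)))
    · exact ((hS.const_mul t).exp).aestronglyMeasurable
    · apply Filter.Eventually.of_forall
      intro ω
      rw [Real.norm_eq_abs, abs_of_pos (Real.exp_pos _), Real.exp_le_exp]
      have hSb : (∑ i, X i) ω ≤ m := by
        rw [Finset.sum_apply]
        calc ∑ i, X i ω ≤ ∑ _i : Fin m, (1 : ℝ) := by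
              apply Finset.sum_le_sum
              intro i _
              rcases hval i ω with h | h <;> simp [h]
          _ = m := by simp
      have hSnn : 0 ≤ (∑ i, X i) ω := by
        rw [Finset.sum_apply]
        apply Finset.sum_nonneg
        intro i _
        rcases hval i ω with h | h <;> simp [h]
      calc t * (∑ i, X i) ω ≤ |t * (∑ i, X i) ω| := le_abs_self _
        _ = |t| * (∑ i, X i) ω := by rw [abs_mul, abs_of_nonneg hSnn]
        _ ≤ |t| * m := by
            apply mul_le_mul_of_nonneg_left hSb (abs_nonneg t)
  have hmgf : ∀ t : ℝ, mgf (∑ i, X i) μ t ≤ Real.exp ((m : ℝ) * (t * p + t ^ 2 / 8)) := by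
    intro t
    rw [hindep.mgf_sum hmeas Finset.univ]
    have heach : ∀ i : Fin m, mgf (X i) μ t = (1 - p) + p * Real.exp t := fun i =>
      bernoulli_mgf μ (X i) (hmeas i) (hval i) p hp0 (hmean i) t
    calc ∏ i, mgf (X i) μ t = ((1 - p) + p * Real.exp t) ^ m := by
          rw [Finset.prod_congr rfl (fun i _ => heach i)]
          simp
      _ ≤ Real.exp (t * p + t ^ 2 / 8) ^ m := by
          apply pow_le_pow_left₀ (by nlinarith [Real.exp_pos t])
          exact bern_mgf_le p hp0 hp1 t
      _ = Real.exp ((m : ℝ) * (t * p + t ^ 2 / 8)) := by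
          rw [← Real.exp_nat_mul]
  -- the two tail bounds
  have hexpval : Real.exp (-(2 * m * ε ^ 2)) = δ / 2 := by
    have h2m : (2 : ℝ) * m ≠ 0 := by positivity
    rw [hε2, show (2 : ℝ) * m * (Real.log (2 / δ) / (2 * m)) = Real.log (2 / δ) by
      field_simp]
    rw [Real.exp_neg, Real.exp_log (by positivity), inv_div]
  have tail1 : (μ {ω | (m : ℝ) * (p + ε) ≤ (∑ i, X i) ω}).toReal ≤ δ / 2 := by
    have h := measure_ge_le_exp_mul_mgf (X := ∑ i, X i) (t := 4 * ε) ((m : ℝ) * (p + ε))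
      (by positivity) (hint _)
    calc (μ {ω | (m : ℝ) * (p + ε) ≤ (∑ i, X i) ω}).toReal
        ≤ Real.exp (-(4 * ε) * ((m : ℝ) * (p + ε))) * mgf (∑ i, X i) μ (4 * ε) := h
      _ ≤ Real.exp (-(4 * ε) * ((m : ℝ) * (p + ε))) *
            Real.exp ((m : ℝ) * (4 * ε * p + (4 * ε) ^ 2 / 8)) := by
          apply mul_le_mul_of_nonneg_left (hmgf _) (Real.exp_pos _).le
      _ = Real.exp (-(2 * m * ε ^ 2)) := by
          rw [← Real.exp_add]
          congr 1
          ring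
      _ = δ / 2 := hexpval
  have tail2 : (μ {ω | (∑ i, X i) ω ≤ (m : ℝ) * (p - ε)}).toReal ≤ δ / 2 := by
    have h := measure_le_le_exp_mul_mgf (X := ∑ i, X i) (t := -(4 * ε)) ((m : ℝ) * (p - ε))
      (by linarith) (hint _)
    calc (μ {ω | (∑ i, X i) ω ≤ (m : ℝ) * (p - ε)}).toReal
        ≤ Real.exp (-(-(4 * ε)) * ((m : ℝ) * (p - ε))) * mgf (∑ i, X i) μ (-(4 * ε)) := h
      _ ≤ Real.exp (-(-(4 * ε)) * ((m : ℝ) * (p - ε))) *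
            Real.exp ((m : ℝ) * (-(4 * ε) * p + (-(4 * ε)) ^ 2 / 8)) := by
          apply mul_le_mul_of_nonneg_left (hmgf _) (Real.exp_pos _).le
      _ = Real.exp (-(2 * m * ε ^ 2)) := by
          rw [← Real.exp_add]
          congr 1
          ring
      _ = δ / 2 := hexpval
  -- combine
  set bad1 : Set Ω := {ω | (m : ℝ) * (p + ε) ≤ (∑ i, X i) ω} with hbad1
  set bad2 : Set Ω := {ω | (∑ i, X i) ω ≤ (m : ℝ) * (p - ε)} with hbad2
  have hmb1 : MeasurableSet bad1 := measurableSet_le measurable_const hS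
  have hmb2 : MeasurableSet bad2 := measurableSet_le hS measurable_const
  have hb1 : μ bad1 ≤ ENNReal.ofReal (δ / 2) := by
    rw [← ENNReal.ofReal_toReal (measure_ne_top μ bad1)]
    exact ENNReal.ofReal_le_ofReal tail1
  have hb2 : μ bad2 ≤ ENNReal.ofReal (δ / 2) := by
    rw [← ENNReal.ofReal_toReal (measure_ne_top μ bad2)]
    exact ENNReal.ofReal_le_ofReal tail2
  have hbad : μ (bad1 ∪ bad2) ≤ ENNReal.ofReal δ := by
    calc μ (bad1 ∪ bad2) ≤ μ bad1 + μ bad2 := measure_union_le _ _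
      _ ≤ ENNReal.ofReal (δ / 2) + ENNReal.ofReal (δ / 2) := add_le_add hb1 hb2
      _ = ENNReal.ofReal δ := by
          rw [← ENNReal.ofReal_add (by linarith) (by linarith)]
          norm_num
  have hsub : (bad1 ∪ bad2)ᶜ ⊆ {ω | |(∑ i, X i ω) / m - p| ≤ ε} := by
    intro ω hω
    simp only [Set.mem_compl_iff, Set.mem_union, hbad1, hbad2, Set.mem_setOf_eq,
      not_or, not_le] at hω
    obtain ⟨h1, h2⟩ := hω
    rw [Finset.sum_apply] at h1 h2
    simp only [Set.mem_setOf_eq]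
    rw [abs_le]
    have hq : (∑ i : Fin m, X i ω) / (m : ℝ) * m = ∑ i, X i ω :=
      div_mul_cancel₀ _ hm0.ne'
    constructor <;> nlinarith [hq, hm0, h1, h2]
  calc 1 - ENNReal.ofReal δ ≤ 1 - μ (bad1 ∪ bad2) := tsub_le_tsub_left hbad 1
    _ = μ ((bad1 ∪ bad2)ᶜ) := (prob_compl_eq_one_sub (hmb1.union hmb2)).symm
    _ ≤ μ {ω | |(∑ i, X i ω) / m - p| ≤ ε} := measure_mono hsub
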